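/- For the dcpo's P₁ and P₂ described in the context, the set A = ↓{(a,a) : a ∈ max B} ⊆ P₁ × P₂ is Scott closed; that is, A is a lower set in the product order and for every directed subset D of A, sup D ∈ A. -/

import Mathlib

/-!
For `d ∈ P₁ × P₂` let `W d` be the set of maximal `b ∈ B` with `d ≤ (b, b)`. Then `A` consists of
the `d` with `W d` nonempty, and `W` is antitone, so `A` is a lower set. For a directed `D ⊆ A` it
suffices to find one `b` lying in every `W d`, `d ∈ D`, since then `sup D ≤ (b, b)`; and a directed
family of nonempty sets that eventually meets a fixed finite set `T` has a common point. If some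
`W d` is finite, take `T = W d`. Otherwise every `W d` is infinite, which forces `d = (c₁, c₂)` with
`c₁ = (m₁, n₁, ℓ₁)`, `c₂ = (m₂, n₂, ℓ₂)` non-maximal points of `B`. Since the maps `f_{a,b}` are
injective with disjoint ranges, the infinitely many common upper bounds reached through `⊏₂`, `⊏₃`,
`⊏₄` can only exist if `(m₁, n₁, ⊤)` or `(m₂, n₂, ⊤)` lies in `W d`; these two points do not
change along `D`, so `T = {(m₁, n₁, ⊤), (m₂, n₂, ⊤)}` works.
-/

/-- A subset `D` is directed with respect to the relation `le`:
it is nonempty and any two elements have an upper bound in `D`. -/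
def DirectedOn' {α : Type*} (le : α → α → Prop) (D : Set α) : Prop :=
  D.Nonempty ∧ ∀ x ∈ D, ∀ y ∈ D, ∃ z ∈ D, le x z ∧ le y z

/-- `u` is a least upper bound of `D` with respect to the relation `le`. -/
def IsLub' {α : Type*} (le : α → α → Prop) (D : Set α) (u : α) : Prop :=
  (∀ x ∈ D, le x u) ∧ ∀ v, (∀ x ∈ D, le x v) → le u v

/-- Every directed subset has a least upper bound: `le` makes the carrier a dcpo. -/
def IsDcpoRel {α : Type*} (le : α → α → Prop) : Prop :=
  ∀ D : Set α, DirectedOn' le D → ∃ u, IsLub' le D u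

/-- `U` is Scott open with respect to `le`: it is an upper set and every directed subset
whose least upper bound lies in `U` meets `U`. -/
def ScottOpen' {α : Type*} (le : α → α → Prop) (U : Set α) : Prop :=
  (∀ x y, le x y → x ∈ U → y ∈ U) ∧
    ∀ D u, DirectedOn' le D → IsLub' le D u → u ∈ U → (D ∩ U).Nonempty

/-- `A` is Scott closed with respect to `le`: it is a lower set and contains the least upper
bounds of its directed subsets. -/
def ScottClosed' {α : Type*} (le : α → α → Prop) (A : Set α) : Prop :=
  (∀ x y, le x y → y ∈ A → x ∈ A) ∧
    ∀ D u, D ⊆ A → DirectedOn' le D → IsLub' le D u → u ∈ A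

/-- Sobriety of the Scott space of `le`: the space is T₀ and every irreducible Scott closed
subset is the Scott closure `↓x = {y | le y x}` of a unique point `x`. -/
def SoberRel {α : Type*} (le : α → α → Prop) : Prop :=
  (∀ x y : α, (∀ U : Set α, ScottOpen' le U → (x ∈ U ↔ y ∈ U)) → x = y) ∧
    ∀ C : Set α, ScottClosed' le C → C.Nonempty →
      (∀ A B : Set α, ScottClosed' le A → ScottClosed' le B → C ⊆ A ∪ B → C ⊆ A ∨ C ⊆ B) →
      ∃! x : α, C = {y | le y x}

/-! ### The posets `M`, `L`, `B`, `P₁`, `P₂` of Miao, Xi, Jia, Li, Zhao -/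

/-- `ℕ^{<ℕ}`: nonempty finite words over `ℕ`. -/
abbrev NWord : Type := {l : List ℕ // l ≠ []}

/-- The prefix order on nonempty finite words. -/
def wordLE (v w : NWord) : Prop := v.1 <+: w.1

/-- The word of length 1 corresponding to a natural number. -/
def word1 (k : ℕ) : NWord := ⟨[k], by simp⟩

/-- `s.k`: the word `s` extended by the letter `k`. -/
def wordSnoc (s : NWord) (k : ℕ) : NWord := ⟨s.1 ++ [k], by simp⟩

/-- The poset `M = ℕ ⊔ ℕ^{<ℕ}`, the disjoint sum of `ℕ` and the words. -/
abbrev Mt : Type := ℕ ⊕ NWord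

/-- The (disjoint sum) order on `M`. -/
def Mle : Mt → Mt → Prop
  | Sum.inl a, Sum.inl b => a ≤ b
  | Sum.inr v, Sum.inr w => wordLE v w
  | _, _ => False

/-- The strict order on `M`. -/
def Mlt (x y : Mt) : Prop := Mle x y ∧ x ≠ y

/-- Pairs `(a, b)` of naturals with `a < b`. -/
abbrev Pairt : Type := {p : ℕ × ℕ // p.1 < p.2}

/-- The poset `L = ({(a,b) : a < b} × M) ∪ {⊤}`; `none` is the top element `⊤` and
`some (p, x)` is the element `x_{a,b}` for `p = (a,b)`. -/
abbrev Lt : Type := Option (Pairt × Mt)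

/-- The strict order on `L`: everything (other than `⊤`) is strictly below `⊤ = none`, and
`x_{a,b} < y_{a,b}` iff `x < y` in `M` (with the same tag `(a,b)`). -/
def Llt (u v : Lt) : Prop :=
  (u ≠ none ∧ v = none) ∨ ∃ p x y, u = some (p, x) ∧ v = some (p, y) ∧ Mlt x y

/-- The carrier of the poset `B = ℕ × ℕ × L`. -/
abbrev Bt : Type := ℕ × ℕ × Lt

/-- `⊏₁`: `(m, n, ℓ) ⊏₁ (m, n, ℓ')` whenever `ℓ < ℓ'` in `L`. -/
def sq1 : Bt → Bt → Prop := fun x y =>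
  ∃ m n u v, x = (m, n, u) ∧ y = (m, n, v) ∧ Llt u v

/-- `⊏₂`: `(a, n, x_{a,b}) ⊏₂ (f_{a,b}(x), n+1, ⊤)` for a word `x ∈ ℕ^{<ℕ}`. -/
def sq2 (f : Pairt → NWord → ℕ) : Bt → Bt → Prop := fun x y =>
  ∃ (n : ℕ) (p : Pairt) (w : NWord),
    x = (p.1.1, n, some (p, Sum.inr w)) ∧ y = (f p w, n + 1, (none : Lt))

/-- `⊏₃`: `(b, n, x_{a,b}) ⊏₃ (f_{a,b}(x), n+1, ⊤)` for `x ∈ ℕ`, regarded as a word of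
length 1. -/
def sq3 (f : Pairt → NWord → ℕ) : Bt → Bt → Prop := fun x y =>
  ∃ (n k : ℕ) (p : Pairt),
    x = (p.1.2, n, some (p, Sum.inl k)) ∧ y = (f p (word1 k), n + 1, (none : Lt))

/-- `⊏₄`: `(f_{a,b}(s), n, x_{a,b}) ⊏₄ (f_{a,b}(s.x), n, ⊤)` for a word `s` and `x ∈ ℕ`. -/
def sq4 (f : Pairt → NWord → ℕ) : Bt → Bt → Prop := fun x y =>
  ∃ (n k : ℕ) (p : Pairt) (s : NWord),
    x = (f p s, n, some (p, Sum.inl k)) ∧ y = (f p (wordSnoc s k), n, (none : Lt))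

/-- `⊏ = ⊏₁ ∪ ⊏₂ ∪ ⊏₃ ∪ ⊏₄ ∪ ⊏₁;⊏₂ ∪ ⊏₁;⊏₃ ∪ ⊏₁;⊏₄`. -/
def Bsq (f : Pairt → NWord → ℕ) : Bt → Bt → Prop := fun x y =>
  sq1 x y ∨ sq2 f x y ∨ sq3 f x y ∨ sq4 f x y ∨
    (∃ z, sq1 x z ∧ sq2 f z y) ∨ (∃ z, sq1 x z ∧ sq3 f z y) ∨ (∃ z, sq1 x z ∧ sq4 f z y)

/-- The order `⊑` on `B`: the reflexive closure of `⊏`. -/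
def Ble (f : Pairt → NWord → ℕ) (x y : Bt) : Prop := x = y ∨ Bsq f x y

/-- The hypotheses on the data `i`, `f`: `i` is an injection into `P(ℕ)` with pairwise
disjoint values satisfying `n < k` for all `k ∈ i (m, n)`, and each `f_{a,b}` is a monotone
injection of `ℕ^{<ℕ}` (with the prefix order) into `i (a, b)`. -/
structure IFData (i : Pairt → Set ℕ) (f : Pairt → NWord → ℕ) : Prop where
  inj : Function.Injective i
  disj : ∀ p q : Pairt, p ≠ q → i p ∩ i q = ∅
  gt : ∀ p : Pairt, ∀ k ∈ i p, p.1.2 < k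
  mem : ∀ p w, f p w ∈ i p
  finj : ∀ p, Function.Injective (f p)
  fmono : ∀ p v w, wordLE v w → f p v ≤ f p w

/-- The carrier of the poset `P₁ = (ℕ^ℕ × ℕ) ∪ B ∪ {⊤₁}`. -/
abbrev P1t : Type := ((ℕ → ℕ) × ℕ) ⊕ Bt ⊕ Unit

/-- The top element `⊤₁` of `P₁`. -/
def P1top : P1t := Sum.inr (Sum.inr ())

/-- The inclusion of `B` into `P₁`. -/
def P1ofB (b : Bt) : P1t := Sum.inr (Sum.inl b)

/-- The strict order `<₁ ∪ <₂ ∪ <₃ ∪ <₄ ∪ <₁;<₃` of `P₁`: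
`(g, n) <₁ (g, m)` iff `n < m`; `<₂` is `⊏` on `B`; `(g, n) <₃ (g(n), n, ⊤)`;
`x <₄ ⊤₁` for `x ≠ ⊤₁`; and `(g, n) <₁;<₃ (g(m), m, ⊤)` for `n < m`. -/
def P1lt (f : Pairt → NWord → ℕ) : P1t → P1t → Prop := fun x y =>
  (∃ (g : ℕ → ℕ) (n m : ℕ), x = Sum.inl (g, n) ∧ y = Sum.inl (g, m) ∧ n < m) ∨
  (∃ b c : Bt, x = P1ofB b ∧ y = P1ofB c ∧ Bsq f b c) ∨
  (∃ (g : ℕ → ℕ) (n : ℕ), x = Sum.inl (g, n) ∧ y = P1ofB (g n, n, (none : Lt))) ∨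
  (x ≠ P1top ∧ y = P1top) ∨
  (∃ (g : ℕ → ℕ) (n m : ℕ), x = Sum.inl (g, n) ∧ n < m ∧ y = P1ofB (g m, m, (none : Lt)))

/-- The order of `P₁`: the reflexive closure of the strict order. -/
def P1le (f : Pairt → NWord → ℕ) (x y : P1t) : Prop := x = y ∨ P1lt f x y

/-- `X = {g : ℕ → ⋃ₙ Eₙ : g(n) ∈ Eₙ}` where `Eₙ = i(φ(n))`. -/
def Xt (i : Pairt → Set ℕ) (φ : ℕ → Pairt) : Type := {g : ℕ → ℕ // ∀ n, g n ∈ i (φ n)}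

/-- The carrier of the poset `P₂ = (X × ℕ × ℕ) ∪ B ∪ {⊤₂}`. -/
abbrev P2t (i : Pairt → Set ℕ) (φ : ℕ → Pairt) : Type := (Xt i φ × ℕ × ℕ) ⊕ Bt ⊕ Unit

/-- The top element `⊤₂` of `P₂`. -/
def P2top (i : Pairt → Set ℕ) (φ : ℕ → Pairt) : P2t i φ := Sum.inr (Sum.inr ())

/-- The inclusion of `B` into `P₂`. -/
def P2ofB (i : Pairt → Set ℕ) (φ : ℕ → Pairt) (b : Bt) : P2t i φ := Sum.inr (Sum.inl b)

/-- The strict order `<₁ ∪ <₂ ∪ <₃ ∪ <₄ ∪ <₁;<₃` of `P₂`: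
`(g, n, k) <₁ (g, m, k)` iff `n < m`; `<₂` is `⊏` on `B`; `(g, n, k) <₃ (g(n), k, ⊤)`;
`x <₄ ⊤₂` for `x ≠ ⊤₂`; and `(g, n, k) <₁;<₃ (g(m), k, ⊤)` for `n < m`. -/
def P2lt (i : Pairt → Set ℕ) (φ : ℕ → Pairt) (f : Pairt → NWord → ℕ) :
    P2t i φ → P2t i φ → Prop := fun x y =>
  (∃ (g : Xt i φ) (n m k : ℕ), x = Sum.inl (g, n, k) ∧ y = Sum.inl (g, m, k) ∧ n < m) ∨
  (∃ b c : Bt, x = P2ofB i φ b ∧ y = P2ofB i φ c ∧ Bsq f b c) ∨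
  (∃ (g : Xt i φ) (n k : ℕ), x = Sum.inl (g, n, k) ∧ y = P2ofB i φ (g.1 n, k, (none : Lt))) ∨
  (x ≠ P2top i φ ∧ y = P2top i φ) ∨
  (∃ (g : Xt i φ) (n m k : ℕ), x = Sum.inl (g, n, k) ∧ n < m ∧
    y = P2ofB i φ (g.1 m, k, (none : Lt)))

/-- The order of `P₂`: the reflexive closure of the strict order. -/
def P2le (i : Pairt → Set ℕ) (φ : ℕ → Pairt) (f : Pairt → NWord → ℕ) (x y : P2t i φ) : Prop :=
  x = y ∨ P2lt i φ f x y

/-- The componentwise order on the product poset `P₁ × P₂`. -/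
def prodLe (i : Pairt → Set ℕ) (φ : ℕ → Pairt) (f : Pairt → NWord → ℕ)
    (x y : P1t × P2t i φ) : Prop :=
  P1le f x.1 y.1 ∧ P2le i φ f x.2 y.2

/-- `max B`: the set of maximal elements of the poset `B`. -/
def maxB (f : Pairt → NWord → ℕ) : Set Bt := {b : Bt | ∀ c : Bt, Ble f b c → b = c}

/-- The set `A = ↓{(a, a) : a ∈ max B} ⊆ P₁ × P₂`: the lower set, in the product order,
generated by the diagonal copies of the maximal elements of `B`. -/
def Adiag (i : Pairt → Set ℕ) (φ : ℕ → Pairt) (f : Pairt → NWord → ℕ) :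
    Set (P1t × P2t i φ) :=
  {q : P1t × P2t i φ | ∃ b ∈ maxB f, prodLe i φ f q (P1ofB b, P2ofB i φ b)}

theorem DirectedOn.nonempty_biInter_of_finite {ι β : Type*} {r : ι → ι → Prop} {D : Set ι}
    {W : ι → Set β} {T : Set β} {d₀ : ι} (hD : DirectedOn r D)
    (hW : ∀ ⦃d e⦄, r d e → W e ⊆ W d) (hT : T.Finite) (hd₀ : d₀ ∈ D)
    (hmeet : ∀ e ∈ D, r d₀ e → (W e ∩ T).Nonempty) : (⋂ d ∈ D, W d).Nonempty := by
  have hmeet' : ∀ d ∈ D, (W d ∩ T).Nonempty := fun d hd => by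
    obtain ⟨e, he, hde, hd₀e⟩ := hD d hd d₀ hd₀
    exact (hmeet e he hd₀e).mono (Set.inter_subset_inter_left _ (hW hde))
  -- `e₁` minimizes `|W e ∩ T|`; directedness then forces `W e ∩ T = W e₁ ∩ T` above `e₁`.
  let e₁ := Function.argminOn (fun d => (W d ∩ T).ncard) D ⟨d₀, hd₀⟩
  have he₁ : e₁ ∈ D := Function.argminOn_mem _ _ _
  obtain ⟨b, hb⟩ := hmeet' e₁ he₁
  refine ⟨b, Set.mem_iInter₂.2 fun d hd => ?_⟩
  obtain ⟨e, he, hde, he₁e⟩ := hD d hd e₁ he₁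
  have heq : W e ∩ T = W e₁ ∩ T :=
    Set.eq_of_subset_of_ncard_le (Set.inter_subset_inter_left _ (hW he₁e))
      (Function.argminOn_le (fun d => (W d ∩ T).ncard) D he) (hT.subset Set.inter_subset_right)
  exact hW hde (heq ▸ hb).1

lemma Mle_refl (x : Mt) : Mle x x := by
  rcases x with a | w
  exacts [le_refl a, List.prefix_refl _]

lemma Mle_trans {x y z : Mt} (h₁ : Mle x y) (h₂ : Mle y z) : Mle x z := by
  rcases x with a | w <;> rcases y with b | v <;> rcases z with c | u <;> simp_all only [Mle]
  exacts [h₁.trans h₂, List.IsPrefix.trans h₁ h₂]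

lemma Mle_antisymm {x y : Mt} (h₁ : Mle x y) (h₂ : Mle y x) : x = y := by
  rcases x with a | w <;> rcases y with b | v <;> simp_all only [Mle, wordLE]
  · exact congrArg _ (le_antisymm h₁ h₂)
  · exact congrArg _ (Subtype.ext (h₁.eq_of_length (le_antisymm h₁.length_le h₂.length_le)))

lemma Mlt_trans {x y z : Mt} (h₁ : Mlt x y) (h₂ : Mlt y z) : Mlt x z :=
  ⟨Mle_trans h₁.1 h₂.1, fun hxz => h₁.2 (Mle_antisymm h₁.1 (hxz ▸ h₂.1))⟩

lemma Llt_trans {u v w : Lt} (h₁ : Llt u v) (h₂ : Llt v w) : Llt u w := by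
  rcases h₁ with ⟨-, rfl⟩ | ⟨p, x, y, rfl, rfl, hxy⟩
  · rcases h₂ with ⟨h, -⟩ | ⟨p, x, y, h, -, -⟩ <;> simp at h
  · rcases h₂ with ⟨-, rfl⟩ | ⟨p', y', z, h, rfl, hyz⟩
    · exact Or.inl ⟨Option.some_ne_none _, rfl⟩
    · obtain ⟨rfl, rfl⟩ : p = p' ∧ y = y' := by simpa using h
      exact Or.inr ⟨p, x, z, rfl, rfl, Mlt_trans hxy hyz⟩

lemma eq_word1_of_wordLE {w : NWord} {k : ℕ} (h : wordLE w (word1 k)) : w = word1 k := by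
  refine Subtype.ext (h.eq_of_length (le_antisymm h.length_le ?_))
  simpa [word1, Nat.one_le_iff_ne_zero] using w.2

lemma word1_ne_wordSnoc (k : ℕ) (s : NWord) (k' : ℕ) : word1 k ≠ wordSnoc s k' := fun h => by
  have := congrArg (fun w : NWord => w.1.length) h
  simp only [word1, wordSnoc, List.length_singleton, List.length_append] at this
  exact s.2 (List.length_eq_zero_iff.1 (by omega))

lemma wordSnoc_inj {s s' : NWord} {k k' : ℕ} (h : wordSnoc s k = wordSnoc s' k') :
    s = s' ∧ k = k' := by
  obtain ⟨h₁, h₂⟩ := List.append_inj' (congrArg Subtype.val h) rfl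
  exact ⟨Subtype.ext h₁, by simpa using h₂⟩

lemma wordLE_of_wordLE_wordSnoc {w s : NWord} {k k' : ℕ} (h : wordLE w (wordSnoc s k))
    (h' : wordLE w (wordSnoc s k')) (hkk' : k ≠ k') : wordLE w s := by
  rcases List.prefix_concat_iff.1 h with h | h
  · rcases List.prefix_concat_iff.1 h' with h' | h'
    · exact absurd (by simpa using h.symm.trans h') hkk'
    · exact h'
  · exact h

def toTop (c : Bt) : Bt := (c.1, c.2.1, none)

/-- `jump2`, `jump3`, `jump4` are `⊏₂`, `⊏₃`, `⊏₄` preceded by an optional `⊏₁`-step. -/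
def jump2 (f : Pairt → NWord → ℕ) (c b : Bt) : Prop :=
  ∃ (n : ℕ) (p : Pairt) (x : Mt) (w : NWord),
    c = (p.1.1, n, some (p, x)) ∧ Mle x (Sum.inr w) ∧ b = (f p w, n + 1, none)

def jump3 (f : Pairt → NWord → ℕ) (c b : Bt) : Prop :=
  ∃ (n : ℕ) (p : Pairt) (x : Mt) (k : ℕ),
    c = (p.1.2, n, some (p, x)) ∧ Mle x (Sum.inl k) ∧ b = (f p (word1 k), n + 1, none)

def jump4 (f : Pairt → NWord → ℕ) (c b : Bt) : Prop :=
  ∃ (n : ℕ) (p : Pairt) (x : Mt) (s : NWord) (k : ℕ),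
    c = (f p s, n, some (p, x)) ∧ Mle x (Sum.inl k) ∧ b = (f p (wordSnoc s k), n, none)

def jump (f : Pairt → NWord → ℕ) (c b : Bt) : Prop := jump2 f c b ∨ jump3 f c b ∨ jump4 f c b

section OrderB

variable {f : Pairt → NWord → ℕ}

lemma sq1_some {m n : ℕ} {p : Pairt} {x y : Mt} (h : Mlt x y) :
    sq1 (m, n, some (p, x)) (m, n, some (p, y)) :=
  ⟨m, n, _, _, rfl, rfl, Or.inr ⟨p, x, y, rfl, rfl, h⟩⟩

lemma sq1_toTop {c : Bt} (hc : c.2.2 ≠ none) : sq1 c (toTop c) :=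
  ⟨c.1, c.2.1, c.2.2, none, rfl, rfl, Or.inl ⟨hc, rfl⟩⟩

lemma sq1_trans {c c' b : Bt} (h₁ : sq1 c c') (h₂ : sq1 c' b) : sq1 c b := by
  obtain ⟨m, n, u, v, rfl, rfl, huv⟩ := h₁
  obtain ⟨m', n', v', w, hv, rfl, hvw⟩ := h₂
  obtain ⟨rfl, rfl, rfl⟩ : m = m' ∧ n = n' ∧ v = v' := by simpa using hv
  exact ⟨m, n, u, w, rfl, rfl, Llt_trans huv hvw⟩

lemma sq1.toTop_eq {c b : Bt} (h : sq1 c b) : toTop c = toTop b := by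
  obtain ⟨m, n, u, v, rfl, rfl, -⟩ := h
  rfl

lemma sq1.ne_none {c b : Bt} (h : sq1 c b) : c.2.2 ≠ none := by
  obtain ⟨m, n, u, v, rfl, rfl, ⟨hu, -⟩ | ⟨p, x, y, rfl, -, -⟩⟩ := h
  exacts [hu, Option.some_ne_none _]

lemma exists_eq_of_sq1_some {c : Bt} {m n : ℕ} {p : Pairt} {y : Mt}
    (h : sq1 c (m, n, some (p, y))) : ∃ x, c = (m, n, some (p, x)) ∧ Mlt x y := by
  obtain ⟨m', n', u, v, rfl, hv, hlt⟩ := h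
  obtain ⟨rfl, rfl, rfl⟩ : m = m' ∧ n = n' ∧ some (p, y) = v := by simpa using hv
  rcases hlt with ⟨-, h⟩ | ⟨p', x, y', rfl, h, hxy⟩
  · simp at h
  · obtain ⟨rfl, rfl⟩ : p = p' ∧ y = y' := by simpa using h
    exact ⟨x, rfl, hxy⟩

lemma sq1.trans_jump {c c' b : Bt} (h₁ : sq1 c c') (h₂ : jump f c' b) : jump f c b := by
  rcases h₂ with ⟨n, p, y, w, rfl, hy, rfl⟩ | ⟨n, p, y, k, rfl, hy, rfl⟩ |
    ⟨n, p, y, s, k, rfl, hy, rfl⟩ <;> obtain ⟨x, rfl, hxy⟩ := exists_eq_of_sq1_some h₁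
  · exact Or.inl ⟨n, p, x, w, rfl, Mle_trans hxy.1 hy, rfl⟩
  · exact Or.inr (Or.inl ⟨n, p, x, k, rfl, Mle_trans hxy.1 hy, rfl⟩)
  · exact Or.inr (Or.inr ⟨n, p, x, s, k, rfl, Mle_trans hxy.1 hy, rfl⟩)

lemma jump.ne_none {c b : Bt} (h : jump f c b) : c.2.2 ≠ none := by
  rcases h with ⟨n, p, x, w, rfl, -⟩ | ⟨n, p, x, k, rfl, -⟩ | ⟨n, p, x, s, k, rfl, -⟩ <;>
    exact Option.some_ne_none _

lemma jump.eq_none {c b : Bt} (h : jump f c b) : b.2.2 = none := by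
  rcases h with ⟨n, p, x, w, -, -, rfl⟩ | ⟨n, p, x, k, -, -, rfl⟩ | ⟨n, p, x, s, k, -, -, rfl⟩ <;>
    rfl

lemma jump.snd_fst {c b : Bt} (h : jump f c b) : b.2.1 = c.2.1 ∨ b.2.1 = c.2.1 + 1 := by
  rcases h with ⟨n, p, x, w, rfl, -, rfl⟩ | ⟨n, p, x, k, rfl, -, rfl⟩ |
    ⟨n, p, x, s, k, rfl, -, rfl⟩
  exacts [Or.inr rfl, Or.inr rfl, Or.inl rfl]

lemma jump.fst_mem {i : Pairt → Set ℕ} (hif : IFData i f) {c b : Bt} (h : jump f c b) :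
    ∃ p x, c.2.2 = some (p, x) ∧ b.1 ∈ i p := by
  rcases h with ⟨n, p, x, w, rfl, -, rfl⟩ | ⟨n, p, x, k, rfl, -, rfl⟩ |
    ⟨n, p, x, s, k, rfl, -, rfl⟩ <;> exact ⟨p, x, rfl, hif.mem _ _⟩

lemma Bsq_of_jump {c b : Bt} (h : jump f c b) : Bsq f c b := by
  rcases h with ⟨n, p, x, w, rfl, hx, rfl⟩ | ⟨n, p, x, k, rfl, hx, rfl⟩ |
    ⟨n, p, x, s, k, rfl, hx, rfl⟩
  · by_cases hxw : x = Sum.inr w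
    · subst hxw
      exact Or.inr (Or.inl ⟨n, p, w, rfl, rfl⟩)
    · exact Or.inr <| Or.inr <| Or.inr <| Or.inr <| Or.inl
        ⟨_, sq1_some ⟨hx, hxw⟩, n, p, w, rfl, rfl⟩
  · by_cases hxk : x = Sum.inl k
    · subst hxk
      exact Or.inr (Or.inr (Or.inl ⟨n, k, p, rfl, rfl⟩))
    · exact Or.inr <| Or.inr <| Or.inr <| Or.inr <| Or.inr <| Or.inl
        ⟨_, sq1_some ⟨hx, hxk⟩, n, k, p, rfl, rfl⟩
  · by_cases hxk : x = Sum.inl k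
    · subst hxk
      exact Or.inr (Or.inr (Or.inr (Or.inl ⟨n, k, p, s, rfl, rfl⟩)))
    · exact Or.inr <| Or.inr <| Or.inr <| Or.inr <| Or.inr <| Or.inr
        ⟨_, sq1_some ⟨hx, hxk⟩, n, k, p, s, rfl, rfl⟩

lemma sq1_or_jump_of_Bsq {c b : Bt} (h : Bsq f c b) : sq1 c b ∨ jump f c b := by
  rcases h with h | ⟨n, p, w, rfl, rfl⟩ | ⟨n, k, p, rfl, rfl⟩ | ⟨n, k, p, s, rfl, rfl⟩ |
    ⟨z, hz, n, p, w, rfl, rfl⟩ | ⟨z, hz, n, k, p, rfl, rfl⟩ | ⟨z, hz, n, k, p, s, rfl, rfl⟩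
  · exact Or.inl h
  · exact Or.inr (Or.inl ⟨n, p, _, w, rfl, Mle_refl _, rfl⟩)
  · exact Or.inr (Or.inr (Or.inl ⟨n, p, _, k, rfl, Mle_refl _, rfl⟩))
  · exact Or.inr (Or.inr (Or.inr ⟨n, p, _, s, k, rfl, Mle_refl _, rfl⟩))
  all_goals obtain ⟨x, rfl, hx⟩ := exists_eq_of_sq1_some hz
  · exact Or.inr (Or.inl ⟨n, p, x, w, rfl, hx.1, rfl⟩)
  · exact Or.inr (Or.inr (Or.inl ⟨n, p, x, k, rfl, hx.1, rfl⟩))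
  · exact Or.inr (Or.inr (Or.inr ⟨n, p, x, s, k, rfl, hx.1, rfl⟩))

lemma Bsq.ne_none {c b : Bt} (h : Bsq f c b) : c.2.2 ≠ none :=
  (sq1_or_jump_of_Bsq h).elim sq1.ne_none jump.ne_none

lemma Bsq_trans {c c' b : Bt} (h₁ : Bsq f c c') (h₂ : Bsq f c' b) : Bsq f c b := by
  rcases sq1_or_jump_of_Bsq h₁ with h₁ | h₁
  · rcases sq1_or_jump_of_Bsq h₂ with h₂ | h₂
    exacts [Or.inl (sq1_trans h₁ h₂), Bsq_of_jump (h₁.trans_jump h₂)]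
  · exact absurd h₁.eq_none h₂.ne_none

lemma Ble_trans {c c' b : Bt} (h₁ : Ble f c c') (h₂ : Ble f c' b) : Ble f c b := by
  rcases h₁ with rfl | h₁
  · exact h₂
  rcases h₂ with rfl | h₂
  exacts [Or.inr h₁, Or.inr (Bsq_trans h₁ h₂)]

lemma mem_maxB_iff {b : Bt} : b ∈ maxB f ↔ b.2.2 = none := by
  refine ⟨fun hb => by_contra fun hne => ?_, fun hb c hbc => ?_⟩
  · have := hb _ (Or.inr (Or.inl (sq1_toTop hne)))
    exact hne (congrArg (fun c : Bt => c.2.2) this)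
  · exact hbc.resolve_right fun h => h.ne_none hb

lemma toTop_mem_maxB (c : Bt) : toTop c ∈ maxB f := mem_maxB_iff.2 rfl

lemma eq_toTop_or_jump_of_Ble {c b : Bt} (hb : b.2.2 = none) (h : Ble f c b) :
    b = toTop c ∨ jump f c b := by
  rcases h with rfl | h
  · exact Or.inl (Prod.ext rfl (Prod.ext rfl hb))
  · refine (sq1_or_jump_of_Bsq h).imp (fun h => ?_) id
    rw [h.toTop_eq]
    exact Prod.ext rfl (Prod.ext rfl hb)

lemma toTop_eq_of_Ble {c c' : Bt} (h : Ble f c c') (hc' : c'.2.2 ≠ none) :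
    toTop c = toTop c' := by
  rcases h with rfl | h
  · rfl
  · exact (sq1_or_jump_of_Bsq h).elim sq1.toTop_eq fun h => absurd h.eq_none hc'

end OrderB

section Jumps

variable {i : Pairt → Set ℕ} {f : Pairt → NWord → ℕ}

lemma IFData.eq_of_mem (hif : IFData i f) {k : ℕ} {p q : Pairt} (hp : k ∈ i p) (hq : k ∈ i q) :
    p = q :=
  by_contra fun hpq => (Set.eq_empty_iff_forall_notMem.1 (hif.disj p q hpq)) k ⟨hp, hq⟩

lemma IFData.eq_of_f_eq (hif : IFData i f) {p q : Pairt} {u v : NWord} (h : f p u = f q v) :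
    p = q ∧ u = v := by
  obtain rfl := hif.eq_of_mem (hif.mem p u) (h ▸ hif.mem q v)
  exact ⟨rfl, hif.finj p h⟩

lemma eq_of_Mle_word1 {x : Mt} {k : ℕ} (h : Mle x (Sum.inr (word1 k))) :
    x = Sum.inr (word1 k) := by
  rcases x with a | w
  · exact h.elim
  · exact congrArg _ (eq_word1_of_wordLE h)

lemma Mle_of_Mle_wordSnoc {x : Mt} {s : NWord} {k k' : ℕ} (h : Mle x (Sum.inr (wordSnoc s k)))
    (h' : Mle x (Sum.inr (wordSnoc s k'))) (hkk' : k ≠ k') : Mle x (Sum.inr s) := by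
  rcases x with a | w
  · exact h.elim
  · exact wordLE_of_wordLE_wordSnoc h h' hkk'

variable {c₁ c₂ b b' : Bt}

lemma toTop_eq_of_jump2 (hif : IFData i f) (h₁ : jump2 f c₁ b) (h₂ : jump2 f c₂ b) :
    toTop c₁ = toTop c₂ := by
  obtain ⟨n, p, x, w, rfl, -, rfl⟩ := h₁
  obtain ⟨n', p', x', w', rfl, -, hb⟩ := h₂
  simp only [Prod.mk.injEq, Nat.add_right_cancel_iff, and_true] at hb
  obtain ⟨rfl, -⟩ := hif.eq_of_f_eq hb.1
  simp [toTop, hb.2]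

lemma toTop_eq_of_jump3 (hif : IFData i f) (h₁ : jump3 f c₁ b) (h₂ : jump3 f c₂ b) :
    toTop c₁ = toTop c₂ := by
  obtain ⟨n, p, x, k, rfl, -, rfl⟩ := h₁
  obtain ⟨n', p', x', k', rfl, -, hb⟩ := h₂
  simp only [Prod.mk.injEq, Nat.add_right_cancel_iff, and_true] at hb
  obtain ⟨rfl, -⟩ := hif.eq_of_f_eq hb.1
  simp [toTop, hb.2]

lemma toTop_eq_of_jump4 (hif : IFData i f) (h₁ : jump4 f c₁ b) (h₂ : jump4 f c₂ b) :
    toTop c₁ = toTop c₂ := by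
  obtain ⟨n, p, x, s, k, rfl, -, rfl⟩ := h₁
  obtain ⟨n', p', x', s', k', rfl, -, hb⟩ := h₂
  simp only [Prod.mk.injEq, and_true] at hb
  obtain ⟨rfl, hs⟩ := hif.eq_of_f_eq hb.1
  obtain ⟨rfl, -⟩ := wordSnoc_inj hs
  simp [toTop, hb.2]

lemma not_jump3_and_jump4 (hif : IFData i f) (h₁ : jump3 f c₁ b) (h₂ : jump4 f c₂ b) : False := by
  obtain ⟨n, p, x, k, -, -, rfl⟩ := h₁
  obtain ⟨n', p', x', s, k', -, -, hb⟩ := h₂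
  exact word1_ne_wordSnoc _ _ _ (hif.eq_of_f_eq (congrArg Prod.fst hb)).2

-- A word below a one-letter word is that word, so `b` is determined by `c₁`.
lemma eq_of_jump2_of_jump3 (hif : IFData i f) (h₁ : jump2 f c₁ b) (h₂ : jump3 f c₂ b)
    (h₁' : jump2 f c₁ b') (h₂' : jump3 f c₂ b') : b = b' := by
  obtain ⟨n, p, x, w, rfl, hx, rfl⟩ := h₁
  obtain ⟨n', p', x', w', he, hx', rfl⟩ := h₁'
  simp only [Prod.mk.injEq, Option.some.injEq] at he
  obtain ⟨-, rfl, rfl, rfl⟩ := he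
  have hword : ∀ {v}, Mle x (Sum.inr v) → jump3 f c₂ (f p v, n + 1, none) → x = Sum.inr v := by
    rintro v hv ⟨_, _, _, k, -, -, hb⟩
    obtain ⟨-, rfl⟩ := hif.eq_of_f_eq (congrArg Prod.fst hb)
    exact eq_of_Mle_word1 hv
  cases (hword hx h₂).symm.trans (hword hx' h₂')
  rfl

-- Two distinct common upper bounds `f(s.k)`, `f(s.k')` force `x ≤ s`, i.e. `c₁ ⊏ f(s)`.
lemma jump2_toTop_of_jump2_of_jump4 (hif : IFData i f) (h₁ : jump2 f c₁ b) (h₂ : jump4 f c₂ b)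
    (h₁' : jump2 f c₁ b') (h₂' : jump4 f c₂ b') (hne : b ≠ b') : jump2 f c₁ (toTop c₂) := by
  obtain ⟨n, p, x, w, rfl, hx, rfl⟩ := h₁
  obtain ⟨n', p', x', w', he, hx', rfl⟩ := h₁'
  simp only [Prod.mk.injEq, Option.some.injEq] at he
  obtain ⟨-, rfl, rfl, rfl⟩ := he
  obtain ⟨m, q, y, s, k, rfl, -, hb⟩ := h₂
  obtain ⟨m', q', y', s', k', he, -, hb'⟩ := h₂'
  simp only [Prod.mk.injEq, Option.some.injEq] at he hb hb'
  obtain ⟨hs, rfl, rfl, rfl⟩ := he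
  obtain ⟨-, rfl⟩ := hif.eq_of_f_eq hs
  obtain ⟨hf, rfl, -⟩ := hb
  obtain ⟨hf', -, -⟩ := hb'
  obtain ⟨rfl, rfl⟩ := hif.eq_of_f_eq hf
  obtain ⟨-, rfl⟩ := hif.eq_of_f_eq hf'
  have hkk' : k ≠ k' := by
    rintro rfl
    exact hne rfl
  exact ⟨n, p, x, s, rfl, Mle_of_Mle_wordSnoc hx hx' hkk', rfl⟩

lemma Bsq_toTop_of_infinite (hif : IFData i f) (hc₂ : c₂.2.2 ≠ none)
    (h : {b | jump f c₁ b ∧ jump f c₂ b}.Infinite) :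
    Bsq f c₂ (toTop c₁) ∨ Bsq f c₁ (toTop c₂) := by
  have hsame : toTop c₁ = toTop c₂ → Bsq f c₂ (toTop c₁) ∨ Bsq f c₁ (toTop c₂) :=
    fun h => Or.inl (h ▸ Or.inl (sq1_toTop hc₂))
  simp only [jump, and_or_left, or_and_right, Set.ofPred_or, Set.infinite_union] at h
  rcases h with (h | h | h) | (h | h | h) | h | h | h <;>
    obtain ⟨b, ⟨h₁, h₂⟩, b', ⟨h₁', h₂'⟩, hne⟩ := h.nontrivial
  · exact hsame (toTop_eq_of_jump2 hif h₁ h₂)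
  · exact absurd (eq_of_jump2_of_jump3 hif h₂ h₁ h₂' h₁') hne
  · exact Or.inl (Bsq_of_jump (Or.inl (jump2_toTop_of_jump2_of_jump4 hif h₂ h₁ h₂' h₁' hne)))
  · exact absurd (eq_of_jump2_of_jump3 hif h₁ h₂ h₁' h₂') hne
  · exact hsame (toTop_eq_of_jump3 hif h₁ h₂)
  · exact (not_jump3_and_jump4 hif h₂ h₁).elim
  · exact Or.inr (Bsq_of_jump (Or.inl (jump2_toTop_of_jump2_of_jump4 hif h₁ h₂ h₁' h₂' hne)))
  · exact (not_jump3_and_jump4 hif h₁ h₂).elim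
  · exact hsame (toTop_eq_of_jump4 hif h₁ h₂)

end Jumps

section OrderP

variable {i : Pairt → Set ℕ} {φ : ℕ → Pairt} {f : Pairt → NWord → ℕ}

lemma P1ofB_injective : Function.Injective P1ofB := fun b c h => by
  simpa [P1ofB] using h

lemma P2ofB_injective : Function.Injective (P2ofB i φ) := fun b c h => by
  simpa [P2ofB] using h

lemma P1le_ofB_iff {x : P1t} {b : Bt} :
    P1le f x (P1ofB b) ↔ (∃ c, x = P1ofB c ∧ Ble f c b) ∨
      ∃ (g : ℕ → ℕ) (n l : ℕ), n ≤ l ∧ x = Sum.inl (g, n) ∧ b = (g l, l, none) := by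
  constructor
  · rintro (rfl | ⟨g, n, m, -, hy, -⟩ | ⟨c, c', rfl, hy, hcc'⟩ | ⟨g, n, rfl, hy⟩ | ⟨-, hy⟩ |
      ⟨g, n, m, rfl, hnm, hy⟩)
    · exact Or.inl ⟨b, rfl, Or.inl rfl⟩
    · simp [P1ofB] at hy
    · exact Or.inl ⟨c, rfl, Or.inr (P1ofB_injective hy ▸ hcc')⟩
    · exact Or.inr ⟨g, n, n, le_rfl, rfl, P1ofB_injective hy⟩
    · simp [P1ofB, P1top] at hy
    · exact Or.inr ⟨g, n, m, hnm.le, rfl, P1ofB_injective hy⟩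
  · rintro (⟨c, rfl, rfl | hcb⟩ | ⟨g, n, l, hnl, rfl, rfl⟩)
    · exact Or.inl rfl
    · exact Or.inr (Or.inr (Or.inl ⟨c, b, rfl, rfl, hcb⟩))
    · rcases hnl.eq_or_lt with rfl | hnl
      · exact Or.inr (Or.inr (Or.inr (Or.inl ⟨g, n, rfl, rfl⟩)))
      · exact Or.inr (Or.inr (Or.inr (Or.inr (Or.inr ⟨g, n, l, rfl, hnl, rfl⟩))))

lemma P2le_ofB_iff {y : P2t i φ} {b : Bt} :
    P2le i φ f y (P2ofB i φ b) ↔ (∃ c, y = P2ofB i φ c ∧ Ble f c b) ∨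
      ∃ (g : Xt i φ) (n k l : ℕ), n ≤ l ∧ y = Sum.inl (g, n, k) ∧ b = (g.1 l, k, none) := by
  constructor
  · rintro (rfl | ⟨g, n, m, k, -, hy, -⟩ | ⟨c, c', rfl, hy, hcc'⟩ | ⟨g, n, k, rfl, hy⟩ | ⟨-, hy⟩ |
      ⟨g, n, m, k, rfl, hnm, hy⟩)
    · exact Or.inl ⟨b, rfl, Or.inl rfl⟩
    · simp [P2ofB] at hy
    · exact Or.inl ⟨c, rfl, Or.inr (P2ofB_injective hy ▸ hcc')⟩
    · exact Or.inr ⟨g, n, k, n, le_rfl, rfl, P2ofB_injective hy⟩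
    · simp [P2ofB, P2top] at hy
    · exact Or.inr ⟨g, n, k, m, hnm.le, rfl, P2ofB_injective hy⟩
  · rintro (⟨c, rfl, rfl | hcb⟩ | ⟨g, n, k, l, hnl, rfl, rfl⟩)
    · exact Or.inl rfl
    · exact Or.inr (Or.inr (Or.inl ⟨c, b, rfl, rfl, hcb⟩))
    · rcases hnl.eq_or_lt with rfl | hnl
      · exact Or.inr (Or.inr (Or.inr (Or.inl ⟨g, n, k, rfl, rfl⟩)))
      · exact Or.inr (Or.inr (Or.inr (Or.inr (Or.inr ⟨g, n, l, k, rfl, hnl, rfl⟩))))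

lemma P1le_ofB_ofB_iff {c b : Bt} : P1le f (P1ofB c) (P1ofB b) ↔ Ble f c b := by
  rw [P1le_ofB_iff]
  constructor
  · rintro (⟨c', hc, hcb⟩ | ⟨g, n, l, -, hc, -⟩)
    · exact P1ofB_injective hc ▸ hcb
    · simp [P1ofB] at hc
  · exact fun h => Or.inl ⟨c, rfl, h⟩

lemma P2le_ofB_ofB_iff {c b : Bt} : P2le i φ f (P2ofB i φ c) (P2ofB i φ b) ↔ Ble f c b := by
  rw [P2le_ofB_iff]
  constructor
  · rintro (⟨c', hc, hcb⟩ | ⟨g, n, k, l, -, hc, -⟩)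
    · exact P2ofB_injective hc ▸ hcb
    · simp [P2ofB] at hc
  · exact fun h => Or.inl ⟨c, rfl, h⟩

lemma exists_eq_of_P1le_inl_ofB {g : ℕ → ℕ} {n : ℕ} {b : Bt}
    (h : P1le f (Sum.inl (g, n)) (P1ofB b)) : ∃ l, b = (g l, l, none) := by
  rcases P1le_ofB_iff.1 h with ⟨c, hc, -⟩ | ⟨g', n', l, -, hg, rfl⟩
  · simp [P1ofB] at hc
  · obtain ⟨rfl, -⟩ := Prod.mk.inj (Sum.inl_injective hg)
    exact ⟨l, rfl⟩

lemma exists_eq_of_P2le_inl_ofB {g : Xt i φ} {n k : ℕ} {b : Bt}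
    (h : P2le i φ f (Sum.inl (g, n, k)) (P2ofB i φ b)) : ∃ l, b = (g.1 l, k, none) := by
  rcases P2le_ofB_iff.1 h with ⟨c, hc, -⟩ | ⟨g', n', k', l, -, hg, rfl⟩
  · simp [P2ofB] at hc
  · simp only [Sum.inl.injEq, Prod.mk.injEq] at hg
    obtain ⟨rfl, -, rfl⟩ := hg
    exact ⟨l, rfl⟩

lemma not_P1le_top_ofB {b : Bt} : ¬ P1le f P1top (P1ofB b) := by
  rw [P1le_ofB_iff]
  rintro (⟨c, hc, -⟩ | ⟨g, n, l, -, hc, -⟩) <;> simp [P1top, P1ofB] at hc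

lemma not_P2le_top_ofB {b : Bt} : ¬ P2le i φ f (P2top i φ) (P2ofB i φ b) := by
  rw [P2le_ofB_iff]
  rintro (⟨c, hc, -⟩ | ⟨g, n, k, l, -, hc, -⟩) <;> simp [P2top, P2ofB] at hc

lemma exists_eq_of_P1le_inl {x : P1t} {g : ℕ → ℕ} {n : ℕ} (h : P1le f x (Sum.inl (g, n))) :
    ∃ n' ≤ n, x = Sum.inl (g, n') := by
  rcases h with rfl | ⟨g', n', m, rfl, hy, hnm⟩ | ⟨b, c, -, hy, -⟩ | ⟨g', n', -, hy⟩ | ⟨-, hy⟩ |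
    ⟨g', n', m, -, -, hy⟩
  · exact ⟨n, le_rfl, rfl⟩
  · obtain ⟨rfl, rfl⟩ := Prod.mk.inj (Sum.inl_injective hy)
    exact ⟨n', hnm.le, rfl⟩
  all_goals simp [P1ofB, P1top] at hy

lemma exists_eq_of_P2le_inl {y : P2t i φ} {g : Xt i φ} {n k : ℕ}
    (h : P2le i φ f y (Sum.inl (g, n, k))) : ∃ n' ≤ n, y = Sum.inl (g, n', k) := by
  rcases h with rfl | ⟨g', n', m, k', rfl, hy, hnm⟩ | ⟨b, c, -, hy, -⟩ | ⟨g', n', k', -, hy⟩ |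
    ⟨-, hy⟩ | ⟨g', n', m, k', -, -, hy⟩
  · exact ⟨n, le_rfl, rfl⟩
  · simp only [Sum.inl.injEq, Prod.mk.injEq] at hy
    obtain ⟨rfl, rfl, rfl⟩ := hy
    exact ⟨n', hnm.le, rfl⟩
  all_goals simp [P2ofB, P2top] at hy

-- Below a point of `B`, an element of `ℕ^ℕ × ℕ` can only sit under a maximal one.
lemma P1le_trans_ofB {x y : P1t} {b : Bt} (h₁ : P1le f x y) (h₂ : P1le f y (P1ofB b)) :
    P1le f x (P1ofB b) := by
  rcases P1le_ofB_iff.1 h₂ with ⟨c, rfl, hcb⟩ | ⟨g, n, l, hnl, rfl, rfl⟩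
  · rcases P1le_ofB_iff.1 h₁ with ⟨c', rfl, hc'c⟩ | ⟨g, n, l, -, rfl, rfl⟩
    · exact P1le_ofB_ofB_iff.2 (Ble_trans hc'c hcb)
    · rwa [← (mem_maxB_iff.2 rfl : (g l, l, (none : Lt)) ∈ maxB f) b hcb]
  · obtain ⟨n', hn', rfl⟩ := exists_eq_of_P1le_inl h₁
    exact P1le_ofB_iff.2 (Or.inr ⟨g, n', l, hn'.trans hnl, rfl, rfl⟩)

lemma P2le_trans_ofB {x y : P2t i φ} {b : Bt} (h₁ : P2le i φ f x y)
    (h₂ : P2le i φ f y (P2ofB i φ b)) : P2le i φ f x (P2ofB i φ b) := by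
  rcases P2le_ofB_iff.1 h₂ with ⟨c, rfl, hcb⟩ | ⟨g, n, k, l, hnl, rfl, rfl⟩
  · rcases P2le_ofB_iff.1 h₁ with ⟨c', rfl, hc'c⟩ | ⟨g, n, k, l, -, rfl, rfl⟩
    · exact P2le_ofB_ofB_iff.2 (Ble_trans hc'c hcb)
    · rwa [← (mem_maxB_iff.2 rfl : (g.1 l, k, (none : Lt)) ∈ maxB f) b hcb]
  · obtain ⟨n', hn', rfl⟩ := exists_eq_of_P2le_inl h₁
    exact P2le_ofB_iff.2 (Or.inr ⟨g, n', k, l, hn'.trans hnl, rfl, rfl⟩)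

lemma prodLe_trans_diag {x y : P1t × P2t i φ} {b : Bt} (h₁ : prodLe i φ f x y)
    (h₂ : prodLe i φ f y (P1ofB b, P2ofB i φ b)) : prodLe i φ f x (P1ofB b, P2ofB i φ b) :=
  ⟨P1le_trans_ofB h₁.1 h₂.1, P2le_trans_ofB h₁.2 h₂.2⟩

end OrderP

def diagMaxAbove (i : Pairt → Set ℕ) (φ : ℕ → Pairt) (f : Pairt → NWord → ℕ)
    (d : P1t × P2t i φ) : Set Bt :=
  {b | b ∈ maxB f ∧ prodLe i φ f d (P1ofB b, P2ofB i φ b)}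

section DiagMaxAbove

variable {i : Pairt → Set ℕ} {φ : ℕ → Pairt} {f : Pairt → NWord → ℕ}

lemma diagMaxAbove_anti ⦃d e : P1t × P2t i φ⦄ (h : prodLe i φ f d e) :
    diagMaxAbove i φ f e ⊆ diagMaxAbove i φ f d :=
  fun _ hb => ⟨hb.1, prodLe_trans_diag h hb.2⟩

lemma diagMaxAbove_top_left_subset {y : P2t i φ} : diagMaxAbove i φ f (P1top, y) ⊆ ∅ :=
  fun _ hb => not_P1le_top_ofB hb.2.1

lemma diagMaxAbove_top_right_subset {x : P1t} : diagMaxAbove i φ f (x, P2top i φ) ⊆ ∅ :=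
  fun _ hb => not_P2le_top_ofB hb.2.2

lemma diagMaxAbove_ofB_left_subset {c : Bt} {y : P2t i φ} (hc : c.2.2 = none) :
    diagMaxAbove i φ f (P1ofB c, y) ⊆ {c} :=
  fun b hb => ((mem_maxB_iff.2 hc) b (P1le_ofB_ofB_iff.1 hb.2.1)).symm

lemma diagMaxAbove_ofB_right_subset {c : Bt} {x : P1t} (hc : c.2.2 = none) :
    diagMaxAbove i φ f (x, P2ofB i φ c) ⊆ {c} :=
  fun b hb => ((mem_maxB_iff.2 hc) b (P2le_ofB_ofB_iff.1 hb.2.2)).symm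

lemma diagMaxAbove_inl_inl_subset {g : ℕ → ℕ} {h : Xt i φ} {n j k : ℕ} :
    diagMaxAbove i φ f (Sum.inl (g, n), Sum.inl (h, j, k)) ⊆ {(g k, k, none)} := by
  rintro b ⟨-, h₁, h₂⟩
  obtain ⟨l, rfl⟩ := exists_eq_of_P1le_inl_ofB h₁
  obtain ⟨l', hl'⟩ := exists_eq_of_P2le_inl_ofB h₂
  rw [(Prod.mk.inj (Prod.mk.inj hl').2).1]
  rfl

-- Maximal elements above `c` sit at level `c.2.1` or `c.2.1 + 1`.
lemma diagMaxAbove_inl_ofB_subset {g : ℕ → ℕ} {n : ℕ} {c : Bt} :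
    diagMaxAbove i φ f (Sum.inl (g, n), P2ofB i φ c) ⊆
      (fun l => (g l, l, none)) '' {c.2.1, c.2.1 + 1} := by
  rintro b ⟨hb, h₁, h₂⟩
  obtain ⟨l, rfl⟩ := exists_eq_of_P1le_inl_ofB h₁
  refine ⟨l, ?_, rfl⟩
  rcases eq_toTop_or_jump_of_Ble (mem_maxB_iff.1 hb) (P2le_ofB_ofB_iff.1 h₂) with h | h
  · exact Or.inl (congrArg (fun b : Bt => b.2.1) h)
  · exact h.snd_fst

-- The jumps above `c = (_, _, x_p)` land in `i p`, which meets only one `Eₗ = i (φ l)`.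
lemma diagMaxAbove_ofB_inl_subset (hif : IFData i f) {c : Bt} {h : Xt i φ} {j k : ℕ} :
    diagMaxAbove i φ f (P1ofB c, Sum.inl (h, j, k)) ⊆
      insert (toTop c) ((fun l => (h.1 l, k, none)) '' {l | ∃ x, c.2.2 = some (φ l, x)}) := by
  rintro b ⟨hb, h₁, h₂⟩
  obtain ⟨l, rfl⟩ := exists_eq_of_P2le_inl_ofB h₂
  rcases eq_toTop_or_jump_of_Ble (mem_maxB_iff.1 hb) (P1le_ofB_ofB_iff.1 h₁) with hj | hj
  · exact Or.inl hj
  · obtain ⟨p, x, hc, hmem⟩ := hj.fst_mem hif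
    exact Or.inr ⟨l, ⟨x, hif.eq_of_mem (h.2 l) hmem ▸ hc⟩, rfl⟩

lemma exists_eq_ofB_of_infinite (hif : IFData i f) (hφ : Function.Injective φ)
    {d : P1t × P2t i φ} (h : (diagMaxAbove i φ f d).Infinite) :
    ∃ c₁ c₂ : Bt, c₁.2.2 ≠ none ∧ c₂.2.2 ≠ none ∧ d = (P1ofB c₁, P2ofB i φ c₂) := by
  rcases d with ⟨⟨g, n⟩ | c₁ | ⟨⟩, ⟨h', j, k⟩ | c₂ | ⟨⟩⟩
  · exact (h ((Set.finite_singleton _).subset diagMaxAbove_inl_inl_subset)).elim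
  · exact (h (((Set.toFinite _).image _).subset diagMaxAbove_inl_ofB_subset)).elim
  · exact (h (Set.finite_empty.subset diagMaxAbove_top_right_subset)).elim
  · have hsub : {l | ∃ x, c₁.2.2 = some (φ l, x)}.Subsingleton := by
      rintro l ⟨x, hx⟩ l' ⟨x', hx'⟩
      exact hφ (Prod.mk.inj (Option.some_injective _ (hx.symm.trans hx'))).1
    exact (h (((hsub.finite.image _).insert _).subset (diagMaxAbove_ofB_inl_subset hif))).elim
  · exact ⟨c₁, c₂, fun hc => h ((Set.finite_singleton _).subset (diagMaxAbove_ofB_left_subset hc)),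
      fun hc => h ((Set.finite_singleton _).subset (diagMaxAbove_ofB_right_subset hc)), rfl⟩
  · exact (h (Set.finite_empty.subset diagMaxAbove_top_right_subset)).elim
  all_goals exact (h (Set.finite_empty.subset diagMaxAbove_top_left_subset)).elim

lemma diagMaxAbove_inter_toTop_nonempty (hif : IFData i f) {c₁ c₂ : Bt} (hc₁ : c₁.2.2 ≠ none)
    (hc₂ : c₂.2.2 ≠ none) (h : (diagMaxAbove i φ f (P1ofB c₁, P2ofB i φ c₂)).Infinite) :
    (diagMaxAbove i φ f (P1ofB c₁, P2ofB i φ c₂) ∩ {toTop c₁, toTop c₂}).Nonempty := by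
  have hjump : {b | jump f c₁ b ∧ jump f c₂ b}.Infinite := by
    refine (h.sdiff (Set.toFinite {toTop c₁, toTop c₂})).mono ?_
    rintro b ⟨⟨hb, h₁, h₂⟩, hne⟩
    have hb' := mem_maxB_iff.1 hb
    exact ⟨(eq_toTop_or_jump_of_Ble hb' (P1le_ofB_ofB_iff.1 h₁)).resolve_left (hne <| Or.inl ·),
      (eq_toTop_or_jump_of_Ble hb' (P2le_ofB_ofB_iff.1 h₂)).resolve_left (hne <| Or.inr ·)⟩
  rcases Bsq_toTop_of_infinite hif hc₂ hjump with h | h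
  · exact ⟨toTop c₁, ⟨toTop_mem_maxB c₁, P1le_ofB_ofB_iff.2 (Or.inr (Or.inl (sq1_toTop hc₁))),
      P2le_ofB_ofB_iff.2 (Or.inr h)⟩, Or.inl rfl⟩
  · exact ⟨toTop c₂, ⟨toTop_mem_maxB c₂, P1le_ofB_ofB_iff.2 (Or.inr h),
      P2le_ofB_ofB_iff.2 (Or.inr (Or.inl (sq1_toTop hc₂)))⟩, Or.inr rfl⟩

lemma nonempty_biInter_diagMaxAbove (hif : IFData i f) (hφ : Function.Injective φ)
    {D : Set (P1t × P2t i φ)} (hD : DirectedOn (prodLe i φ f) D) {d₀ : P1t × P2t i φ}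
    (hd₀ : d₀ ∈ D) (hDA : ∀ d ∈ D, (diagMaxAbove i φ f d).Nonempty) :
    (⋂ d ∈ D, diagMaxAbove i φ f d).Nonempty := by
  by_cases hfin : ∃ d₁ ∈ D, (diagMaxAbove i φ f d₁).Finite
  · obtain ⟨d₁, hd₁, hfin⟩ := hfin
    refine hD.nonempty_biInter_of_finite diagMaxAbove_anti hfin hd₁ fun e he hd₁e => ?_
    rw [Set.inter_eq_left.2 (diagMaxAbove_anti hd₁e)]
    exact hDA e he
  · push Not at hfin
    obtain ⟨c₁, c₂, -, -, rfl⟩ := exists_eq_ofB_of_infinite hif hφ (hfin d₀ hd₀)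
    refine hD.nonempty_biInter_of_finite diagMaxAbove_anti (Set.toFinite {toTop c₁, toTop c₂})
      hd₀ fun e he hde => ?_
    obtain ⟨c₁', c₂', hc₁', hc₂', rfl⟩ := exists_eq_ofB_of_infinite hif hφ (hfin _ he)
    rw [toTop_eq_of_Ble (P1le_ofB_ofB_iff.1 hde.1) hc₁',
      toTop_eq_of_Ble (P2le_ofB_ofB_iff.1 hde.2) hc₂']
    exact diagMaxAbove_inter_toTop_nonempty hif hc₁' hc₂' (hfin _ he)

end DiagMaxAbove

/-- The set `A = ↓{(a, a) : a ∈ max B} ⊆ P₁ × P₂` is Scott closed: it is a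
lower set in the product order and for every directed subset `D` of `A`, `sup D ∈ A`. -/
theorem Adiag_scottClosed (i : Pairt → Set ℕ) (f : Pairt → NWord → ℕ)
    (φ : ℕ → Pairt) (hif : IFData i f) (hφ : Function.Bijective φ) :
    (∀ x y : P1t × P2t i φ, prodLe i φ f x y → y ∈ Adiag i φ f → x ∈ Adiag i φ f) ∧
    ∀ D : Set (P1t × P2t i φ), ∀ u : P1t × P2t i φ, D ⊆ Adiag i φ f →
      DirectedOn' (prodLe i φ f) D → IsLub' (prodLe i φ f) D u → u ∈ Adiag i φ f := by
  refine ⟨fun x y hxy ⟨b, hb, hyb⟩ => ⟨b, hb, prodLe_trans_diag hxy hyb⟩,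
    fun D u hDA hdir hlub => ?_⟩
  obtain ⟨d₀, hd₀⟩ := hdir.1
  obtain ⟨b, hb⟩ := nonempty_biInter_diagMaxAbove hif hφ.1 hdir.2 hd₀ hDA
  rw [Set.mem_iInter₂] at hb
  exact ⟨b, (hb d₀ hd₀).1, hlub.2 _ fun d hd => (hb d hd).2⟩
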